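/- arXiv:2002.06461 — 2 statements merged into one kernel-verified Lean document; each statement's English description precedes it below -/
import Mathlib

section
/- Let G be a finite group and Σ a symmetric subset of G (i.e., closed under inverses). Then Σ generates G if and only if for every nontrivial irreducible complex representation ρ of G, the largest eigenvalue of the Hermitian matrix A_ρ(Σ) := Σ_{s∈Σ} ρ(s) is strictly less than |Σ|. -/
/-!
If `S` generates `G` and `v` is an eigenvector of `A_ρ(S)` with eigenvalue `μ ≥ |S|`, then in a
`G`-invariant inner product `∑_{s ∈ S} ‖ρ(s) v - v‖² = 2 (|S| - μ) ‖v‖² ≤ 0`, so `v` is fixed by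
`S`, hence by `G`, and an irreducible `ρ` with a nonzero fixed vector is trivial.

Conversely, if `S` generates a proper subgroup `H`, pick `g₀ ∉ H` and put
`x = (∑_{h ∈ H} h) (1 - g₀) ∈ ℂ[G]`. Since `ℂ[G]` is semisimple, `x` acts nontrivially on some
irreducible `ρ`; any nonzero vector `ρ(x) w` is fixed by `H`, hence is an eigenvector of `A_ρ(S)`
with eigenvalue `|S|`, and `ρ` is nontrivial because `ρ(x) = 0` when `ρ(g₀) = 1`.
-/

open CategoryTheory MonoidAlgebra

universe u

theorem IsSemisimpleModule.exists_isCoatom_notMem (R : Type*) {M : Type*} [Ring R]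
    [AddCommGroup M] [Module R M] [IsSemisimpleModule R M] {x : M} (hx : x ≠ 0) :
    ∃ N : Submodule R M, IsCoatom N ∧ x ∉ N := by
  by_contra! h
  have : x ∈ Module.jacobson R M := Submodule.mem_sInf.2 h
  rw [IsSemisimpleModule.jacobson_eq_bot, Submodule.mem_bot] at this
  exact hx this

namespace Representation

section Averaging

variable {G W : Type*} [Group G] [Fintype G] [AddCommGroup W] [Module ℂ W]
  [FiniteDimensional ℂ W] (ρ : Representation ℂ G W)

theorem apply_eq_self_of_sum_apply_eq_smul (S : Finset G) {μ : ℝ} {v : W}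
    (hv : (∑ s ∈ S, ρ s) v = (μ : ℂ) • v) (hμ : (S.card : ℝ) ≤ μ) : ∀ s ∈ S, ρ s v = v := by
  let e : W ≃ₗ[ℂ] EuclideanSpace ℂ (Fin (Module.finrank ℂ W)) :=
    .ofFinrankEq _ _ finrank_euclideanSpace_fin.symm
  set Q : W → ℝ := fun x ↦ ∑ g, ‖e (ρ g x)‖ ^ 2 with hQ
  set R : W → ℝ := fun x ↦ ∑ g, RCLike.re (inner ℂ (e (ρ g x)) (e (ρ g v)))
  have Q_nonneg (x : W) : 0 ≤ Q x := Finset.sum_nonneg fun g _ ↦ by positivity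
  have Q_apply (h : G) (x : W) : Q (ρ h x) = Q x :=
    Fintype.sum_equiv (Equiv.mulRight h) _ _ fun g ↦ by simp [map_mul]
  have Q_sub (x : W) : Q (x - v) = Q x - 2 * R x + Q v := by
    simp only [hQ, R, map_sub, @norm_sub_sq ℂ, Finset.mul_sum, Finset.sum_add_distrib,
      Finset.sum_sub_distrib]
  have R_sum : ∑ s ∈ S, R (ρ s v) = μ * Q v := by
    have : ∑ s ∈ S, R (ρ s v) =
        ∑ g, RCLike.re (inner ℂ (e (ρ g ((∑ s ∈ S, ρ s) v))) (e (ρ g v))) := by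
      simp only [R, LinearMap.sum_apply, map_sum, sum_inner]
      exact Finset.sum_comm
    rw [this, hv]
    simp only [map_smul, inner_smul_left, Complex.conj_ofReal, hQ, Finset.mul_sum]
    refine Finset.sum_congr rfl fun g _ ↦ ?_
    rw [RCLike.re_to_complex, Complex.re_ofReal_mul, ← RCLike.re_to_complex,
      inner_self_eq_norm_sq]
  have key : ∑ s ∈ S, Q (ρ s v - v) = 2 * (S.card - μ) * Q v := by
    simp only [Q_sub, Q_apply, Finset.sum_add_distrib, Finset.sum_sub_distrib, ← Finset.mul_sum,
      R_sum, Finset.sum_const, nsmul_eq_mul]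
    ring
  have hzero : ∀ s ∈ S, Q (ρ s v - v) = 0 := by
    refine (Finset.sum_eq_zero_iff_of_nonneg fun s _ ↦ Q_nonneg _).1 (le_antisymm ?_ ?_)
    · rw [key]
      exact mul_nonpos_of_nonpos_of_nonneg (by linarith) (Q_nonneg v)
    · exact Finset.sum_nonneg fun s _ ↦ Q_nonneg _
  intro s hs
  have := (Finset.sum_eq_zero_iff_of_nonneg fun g _ ↦ by positivity).1 (hzero s hs) 1
    (Finset.mem_univ _)
  simpa [sub_eq_zero] using this

end Averaging

theorem apply_eq_self_of_mem_closure {k G V : Type*} [CommSemiring k] [Group G]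
    [AddCommMonoid V] [Module k V] (ρ : Representation k G V) {S : Set G} {v : V}
    (hS : ∀ s ∈ S, ρ s v = v) {g : G} (hg : g ∈ Subgroup.closure S) : ρ g v = v := by
  induction hg using Subgroup.closure_induction with
  | mem s hs => exact hS s hs
  | one => simp
  | mul a b _ _ ha hb => rw [map_mul, Module.End.mul_apply, hb, ha]
  | inv a _ ha =>
    nth_rw 1 [← ha]
    exact ρ.inv_self_apply a v

section OfModule

variable {k G M : Type*} [Field k] [Group G] [AddCommGroup M] [Module k M]
  [Module (MonoidAlgebra k G) M] [IsScalarTower k (MonoidAlgebra k G) M]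

theorem asAlgebraHom_ofModule'_apply (a : MonoidAlgebra k G) (m : M) :
    asAlgebraHom (ofModule' (k := k) (G := G) M) a m = a • m := by
  simp [asAlgebraHom, ofModule']

variable (k G M) in
noncomputable def subrepresentationOfModule'OrderIso :
    Subrepresentation (ofModule' (k := k) (G := G) M) ≃o Submodule (MonoidAlgebra k G) M where
  toFun p :=
    { toAddSubmonoid := p.toSubmodule.toAddSubmonoid
      smul_mem' a m hm := by
        induction a using MonoidAlgebra.induction_on with
        | of g =>
          rw [← asAlgebraHom_ofModule'_apply, asAlgebraHom_of]
          exact p.apply_mem_toSubmodule g hm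
        | add a b ha hb => rw [add_smul]; exact p.toSubmodule.add_mem ha hb
        | smul c a ha => rw [smul_assoc]; exact p.toSubmodule.smul_mem c ha }
  invFun N := ⟨N.restrictScalars k, fun g m hm ↦ by
    rw [← asAlgebraHom_single_one, asAlgebraHom_ofModule'_apply]
    exact N.smul_mem _ hm⟩
  left_inv _ := rfl
  right_inv _ := rfl
  map_rel_iff' := Iff.rfl

theorem isIrreducible_ofModule'_iff :
    IsIrreducible (ofModule' (k := k) (G := G) M) ↔ IsSimpleModule (MonoidAlgebra k G) M := by
  rw [isSimpleModule_iff]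
  exact (subrepresentationOfModule'OrderIso k G M).isSimpleOrder_iff

end OfModule

end Representation

namespace MonoidAlgebra

variable {k G : Type*} [Field k] [Group G]

theorem single_mul_sum_subgroup (H : Subgroup G) [Fintype H] {g : G} (hg : g ∈ H) :
    single g (1 : k) * ∑ h : H, single (h : G) 1 = ∑ h : H, single (h : G) 1 := by
  rw [Finset.mul_sum]
  exact Fintype.sum_equiv (Equiv.mulLeft (⟨g, hg⟩ : H)) _ _ fun h ↦ by simp [single_mul_single]

theorem coeff_sum_subgroup_mul_one_sub_single (H : Subgroup G) [Fintype H] {g₀ : G}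
    (hg₀ : g₀ ∉ H) : ((∑ h : H, single (h : G) (1 : k)) * (1 - single g₀ 1)).coeff 1 = 1 := by
  classical
  have (h : H) : (h : G) ≠ g₀⁻¹ := fun h_eq ↦ hg₀ (inv_inv g₀ ▸ h_eq ▸ H.inv_mem h.2)
  simp [mul_sub, coeff_sum, Finsupp.single_apply, this]

end MonoidAlgebra

namespace FDRep

theorem ρ_eq_one_of_apply_eq_self {k G : Type*} [Field k] [Group G] (V : FDRep k G) [Simple V]
    {v : V} (hv : v ≠ 0) (hfix : ∀ g, V.ρ g v = v) (g : G) : V.ρ g = 1 := by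
  let f : FDRep.of (Representation.trivial k G k) ⟶ V :=
    Representation.linHom.invariantsEquivFDRepHom _ V ⟨LinearMap.toSpanSingleton k V v, fun g ↦ by
      ext; simp [Representation.linHom_apply, hfix g]⟩
  have hf (c : k) : f c = c • v := rfl
  have : Mono f := ConcreteCategory.mono_of_injective f fun a b hab ↦ by
    simpa [hf, hv, smul_left_inj] using hab
  have : IsIso f := isIso_of_mono_of_nonzero fun h ↦ hv <| by
    rw [← one_smul k v, ← hf, h]; rfl
  ext w
  obtain ⟨c, rfl⟩ := (ConcreteCategory.bijective_of_isIso f).2 w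
  simp [hf, hfix g]

variable {k G : Type u} [Field k] [IsAlgClosed k] [Group G] [Finite G]
  [NeZero (Nat.card G : k)]

theorem simple_of_isIrreducible {V : Type u} [AddCommGroup V] [Module k V] [FiniteDimensional k V]
    (ρ : Representation k G V) [ρ.IsIrreducible] : Simple (FDRep.of ρ) := by
  rw [simple_iff_end_is_rank_one, ← (Representation.linHom.invariantsEquivFDRepHom _ _).finrank_eq]
  exact ((Representation.invariantsEquivIntertwiningMap ρ ρ).finrank_eq).trans
    (Representation.IsIrreducible.finrank_intertwiningMap_self ρ)

theorem exists_simple_asAlgebraHom_ne_zero {x : MonoidAlgebra k G} (hx : x ≠ 0) :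
    ∃ V : FDRep k G, Simple V ∧ Representation.asAlgebraHom V.ρ x ≠ 0 := by
  obtain ⟨N, hN, hxN⟩ := IsSemisimpleModule.exists_isCoatom_notMem (MonoidAlgebra k G) hx
  have : IsSimpleModule (MonoidAlgebra k G) (MonoidAlgebra k G ⧸ N) :=
    isSimpleModule_iff_isCoatom.2 hN
  have : (Representation.ofModule' (k := k) (G := G) (MonoidAlgebra k G ⧸ N)).IsIrreducible :=
    Representation.isIrreducible_ofModule'_iff.2 this
  have : Module.Finite k (MonoidAlgebra k G ⧸ N) := Module.Finite.trans (MonoidAlgebra k G) _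
  refine ⟨FDRep.of (Representation.ofModule' (MonoidAlgebra k G ⧸ N)), simple_of_isIrreducible _,
    fun h ↦ hxN ?_⟩
  have := LinearMap.congr_fun h (N.mkQ 1)
  rw [← Submodule.Quotient.mk_eq_zero]
  simpa [Representation.asAlgebraHom_ofModule'_apply, ← Submodule.Quotient.mk_smul] using this

theorem exists_simple_nontrivial_fixed_of_ne_top {H : Subgroup G} (hH : H ≠ ⊤) :
    ∃ V : FDRep k G, Simple V ∧ (∃ g : G, V.ρ g ≠ 1) ∧ ∃ v : V, v ≠ 0 ∧ ∀ h ∈ H, V.ρ h v = v := by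
  obtain ⟨g₀, hg₀⟩ : ∃ g₀, g₀ ∉ H := by
    by_contra! h
    exact hH ((Subgroup.eq_top_iff' H).2 h)
  have := Fintype.ofFinite H
  have hx : (∑ h : H, single (h : G) (1 : k)) * (1 - single g₀ 1) ≠ 0 := fun h ↦ by
    simpa [h] using coeff_sum_subgroup_mul_one_sub_single (k := k) H hg₀
  set w : MonoidAlgebra k G := ∑ h : H, single (h : G) 1
  obtain ⟨V, hV, hxV⟩ := exists_simple_asAlgebraHom_ne_zero hx
  obtain ⟨v, hv⟩ : ∃ v, Representation.asAlgebraHom V.ρ (w * (1 - single g₀ 1)) v ≠ 0 := by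
    by_contra! h
    exact hxV (LinearMap.ext h)
  refine ⟨V, hV, ⟨g₀, fun htriv ↦ hxV ?_⟩, _, hv, fun h hh ↦ ?_⟩
  · rw [map_mul, map_sub, map_one, Representation.asAlgebraHom_single_one, htriv, sub_self,
      mul_zero]
  · rw [← Representation.asAlgebraHom_single_one, ← Module.End.mul_apply, ← map_mul, ← mul_assoc,
      single_mul_sum_subgroup H hh]

end FDRep

theorem stmt_0_general {G : Type} [Group G] [Fintype G] (S : Finset G) :
    Subgroup.closure (S : Set G) = ⊤ ↔
      ∀ V : FDRep ℂ G, Simple V → (∃ g : G, V.ρ g ≠ 1) →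
        ∀ μ : ℝ, (μ : ℂ) ∈ spectrum ℂ (∑ s ∈ S, V.ρ s) → μ < (S.card : ℝ) := by
  constructor
  · rintro hS V hV ⟨g, hg⟩ μ hμ
    by_contra! hle
    obtain ⟨v, hv⟩ := (Module.End.hasEigenvalue_iff_mem_spectrum.2 hμ).exists_hasEigenvector
    have hfixS := Representation.apply_eq_self_of_sum_apply_eq_smul V.ρ S hv.apply_eq_smul hle
    have hfix (g : G) : V.ρ g v = v :=
      Representation.apply_eq_self_of_mem_closure V.ρ hfixS (hS ▸ Subgroup.mem_top g)
    exact hg (V.ρ_eq_one_of_apply_eq_self hv.2 hfix g)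
  · intro hgap
    by_contra hS
    obtain ⟨V, hV, hnt, v, hv, hfix⟩ := FDRep.exists_simple_nontrivial_fixed_of_ne_top (k := ℂ) hS
    have hAv : (∑ s ∈ S, V.ρ s) v = ((S.card : ℝ) : ℂ) • v := by
      rw [LinearMap.sum_apply, Finset.sum_congr rfl fun s hs ↦ hfix s (Subgroup.subset_closure hs),
        Finset.sum_const, Complex.ofReal_natCast, Nat.cast_smul_eq_nsmul]
    have hspec : ((S.card : ℝ) : ℂ) ∈ spectrum ℂ (∑ s ∈ S, V.ρ s) :=
      Module.End.hasEigenvalue_of_hasEigenvector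
        ⟨Module.End.mem_eigenspace_iff.2 hAv, hv⟩ |>.mem_spectrum
    exact lt_irrefl _ (hgap V hV hnt _ hspec)

/-- A symmetric subset `S` of a finite group `G` generates `G` iff for every nontrivial
irreducible complex representation `ρ` of `G`, every (real) eigenvalue of
`A_ρ(S) = ∑_{s ∈ S} ρ(s)` is strictly less than `|S|`. -/
theorem stmt_0 {G : Type} [Group G] [Fintype G] (S : Finset G)
    (hsym : ∀ x ∈ S, x⁻¹ ∈ S) :
    Subgroup.closure (S : Set G) = ⊤ ↔
      ∀ V : FDRep ℂ G, Simple V → (∃ g : G, V.ρ g ≠ 1) →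
        ∀ μ : ℝ, (μ : ℂ) ∈ spectrum ℂ (∑ s ∈ S, V.ρ s) → μ < (S.card : ℝ) :=
  stmt_0_general S
end

section
/- Let n ≥ 25 with n = q + 1 for a prime power q = q₀^ℓ (q₀ prime), and suppose a subgroup of PΓL(2, q) acts transitively on the set of 4-element subsets of P¹(F_q). Then binom(q+1, 4) divides ℓ·(q³ − q), which forces (q − 2) | 24ℓ; for q ≥ 24 the only solution is q = 32. -/
/-!
Every permutation in `K` is induced by a semilinear map, so `K` lies in `PΓL(2, q)`, the image
of `ΓL(2, q) = GL(2, q) ⋊ Aut(F_q)` in the permutations of `P¹(F_q)`. The scalars act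
trivially, so `|PΓL(2, q)|` divides `|GL(2, q)| · ℓ / (q - 1) = ℓ (q³ - q)`, while
transitivity on `4`-subsets makes `binom(q+1, 4)` divide `|K|` by orbit–stabilizer. Since
`24 · binom(q+1, 4) = (q³ - q)(q - 2)`, this gives `(q - 2) ∣ 24ℓ`, hence `q ≤ 24ℓ + 2`,
which leaves finitely many prime powers `q = q₀^ℓ ≥ 24` to inspect.
-/

open scoped MatrixGroups Classical

open scoped LinearAlgebra.Projectivization Pointwise
open Matrix

theorem Nat.choose_four_succ_mul (q : ℕ) : (q + 1).choose 4 * 24 = (q ^ 3 - q) * (q - 2) := by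
  rcases Nat.lt_or_ge q 2 with hq | hq
  · interval_cases q <;> rfl
  obtain ⟨s, rfl⟩ := Nat.exists_eq_add_of_le' hq
  have hcube : (s + 2) ^ 3 - (s + 2) = (s + 3) * (s + 2) * (s + 1) :=
    Nat.sub_eq_of_eq_add (by ring)
  have hdesc := Nat.descFactorial_eq_factorial_mul_choose (s + 3) 4
  norm_num [Nat.descFactorial_succ, Nat.factorial, show s + 3 - 2 = s + 1 from rfl] at hdesc
  rw [hcube, Nat.add_sub_cancel]
  show (s + 3).choose 4 * 24 = _
  linarith

theorem Nat.sub_two_dvd_of_choose_four_dvd {q ℓ : ℕ} (hq : 2 ≤ q)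
    (h : (q + 1).choose 4 ∣ ℓ * (q ^ 3 - q)) : q - 2 ∣ 24 * ℓ := by
  have hpos : 0 < q ^ 3 - q := by
    have := lt_self_pow₀ (show 1 < q by omega) (show 1 < 3 by norm_num)
    omega
  rw [← Nat.mul_dvd_mul_iff_left hpos, ← Nat.choose_four_succ_mul]
  convert Nat.mul_dvd_mul_right h 24 using 1
  ring

theorem Nat.twentyFour_mul_add_two_lt_two_pow {ℓ : ℕ} (hℓ : 8 ≤ ℓ) :
    24 * ℓ + 2 < 2 ^ ℓ := by
  induction ℓ, hℓ using Nat.le_induction with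
  | base => norm_num
  | succ n _ ih => rw [pow_succ]; omega

theorem Nat.pow_eq_32_of_pow_sub_two_dvd {p ℓ : ℕ} (hp : p.Prime) (h24 : 24 ≤ p ^ ℓ)
    (hdvd : p ^ ℓ - 2 ∣ 24 * ℓ) : p ^ ℓ = 32 := by
  have hℓ : 0 < ℓ := Nat.pos_of_ne_zero (by rintro rfl; simp at h24)
  have hle : p ^ ℓ ≤ 24 * ℓ + 2 := by
    have := Nat.le_of_dvd (by omega) hdvd
    omega
  have hℓ7 : ℓ ≤ 7 := by
    by_contra! h
    have := Nat.pow_le_pow_left hp.two_le ℓ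
    have := Nat.twentyFour_mul_add_two_lt_two_pow h
    omega
  have hp26 : p ≤ 26 := by
    by_contra! h
    have := Nat.pow_le_pow_left (show 27 ≤ p by omega) ℓ
    have : 1 + ℓ * 26 ≤ 27 ^ ℓ := by
      exact_mod_cast one_add_mul_le_pow (show (-2 : ℤ) ≤ 26 by norm_num) ℓ
    omega
  interval_cases ℓ <;> interval_cases p <;> simp_all +decide

theorem Subgroup.choose_dvd_card_of_forall_image_eq {X : Type*} [Finite X]
    (K : Subgroup (Equiv.Perm X)) {k : ℕ} (hk : k ≤ Nat.card X)
    (htrans : ∀ s t : Finset X, s.card = k → t.card = k → ∃ π ∈ K, s.image π = t) :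
    (Nat.card X).choose k ∣ Nat.card K := by
  have := Fintype.ofFinite X
  rw [Nat.card_eq_fintype_card] at hk ⊢
  obtain ⟨s₀, hs₀⟩ : (Finset.univ.powersetCard k : Finset (Finset X)).Nonempty :=
    Finset.powersetCard_nonempty.2 (by rwa [Finset.card_univ])
  rw [Finset.mem_powersetCard_univ] at hs₀
  have horbit : MulAction.orbit K s₀ = ↑(Finset.univ.powersetCard k : Finset (Finset X)) := by
    ext t
    rw [Finset.mem_coe, Finset.mem_powersetCard_univ]
    constructor
    · rintro ⟨π, rfl⟩
      exact (Finset.card_smul_finset π s₀).trans hs₀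
    · intro ht
      obtain ⟨π, hπ, rfl⟩ := htrans s₀ t hs₀ ht
      exact ⟨⟨π, hπ⟩, rfl⟩
  rw [← Finset.card_univ, ← Finset.card_powersetCard, ← Set.ncard_coe_finset, ← horbit,
    ← MulAction.index_stabilizer]
  exact Subgroup.index_dvd_card _

theorem MonoidHom.card_range_mul_card_dvd {G H : Type*} [Group G] [Group H] (f : G →* H)
    {N : Subgroup G} (hN : N ≤ f.ker) : Nat.card f.range * Nat.card N ∣ Nat.card G := by
  rw [← Subgroup.index_ker f, mul_comm, ← f.ker.card_mul_index]
  exact Nat.mul_dvd_mul_right (Subgroup.card_dvd_of_le hN) _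

theorem FiniteField.card_ringEquiv {F : Type*} [Field F] [Fintype F] {p n : ℕ} (hp : p.Prime)
    (hF : Fintype.card F = p ^ n) : Nat.card (F ≃+* F) = n := by
  have := Fact.mk hp
  have := charP_of_card_eq_prime_pow hF
  let := ZMod.algebra F p
  have hbij : Function.Bijective ((↑) : (F ≃ₐ[ZMod p] F) → F ≃+* F) :=
    ⟨AlgEquiv.coe_ringEquiv_injective, fun σ => ⟨AlgEquiv.ofRingEquiv (f := σ) fun x =>
      RingHom.congr_fun (Subsingleton.elim ((σ : F →+* F).comp (algebraMap (ZMod p) F)) _) x,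
      rfl⟩⟩
  rw [← Nat.card_congr (Equiv.ofBijective _ hbij), IsGalois.card_aut_eq_finrank]
  apply Nat.pow_right_injective hp.two_le
  show p ^ _ = p ^ n
  rw [← hF, Module.card_eq_pow_finrank (K := ZMod p), ZMod.card]

theorem Matrix.card_GL_fin_two {F : Type*} [Field F] [Fintype F] :
    Nat.card (GL (Fin 2) F) = (Fintype.card F - 1) * (Fintype.card F ^ 3 - Fintype.card F) := by
  have hq : 1 ≤ Fintype.card F := Fintype.card_pos
  rw [card_GL_field, Fin.prod_univ_two, Fin.val_zero, Fin.val_one, pow_zero, pow_one]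
  generalize Fintype.card F = q at hq ⊢
  have hq2 : q ≤ q ^ 2 := Nat.le_self_pow (by norm_num) q
  have hq3 : q ≤ q ^ 3 := Nat.le_self_pow (by norm_num) q
  zify [hq, hq2, hq3, hq.trans hq2]
  ring

section GammaL

variable (n F : Type*) [Fintype n] [DecidableEq n] [Field F]

def Matrix.GeneralLinearGroup.mapRingEquivHom : (F ≃+* F) →* MulAut (GL n F) where
  toFun σ := Units.mapEquiv (RingEquiv.mapMatrix σ).toMulEquiv
  map_one' := by ext; simp [Units.mapEquiv]
  map_mul' σ τ := by ext; simp [Units.mapEquiv]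

abbrev GammaL := GL n F ⋊[Matrix.GeneralLinearGroup.mapRingEquivHom n F] (F ≃+* F)

namespace GammaL

variable {n F}

def semilinearMap (g : GammaL n F) : (n → F) →ₛₗ[(g.right : F →+* F)] (n → F) where
  toFun v := (g.left : Matrix n n F) *ᵥ fun i => g.right (v i)
  map_add' v w := by rw [← mulVec_add]; congr 1; ext; simp
  map_smul' c v := by rw [← mulVec_smul]; congr 1; ext; simp

lemma semilinearMap_apply (g : GammaL n F) (v : n → F) :
    semilinearMap g v = (g.left : Matrix n n F) *ᵥ fun i => g.right (v i) := rfl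

lemma semilinearMap_injective (g : GammaL n F) : Function.Injective (semilinearMap g) :=
  fun _ _ h => funext fun i =>
    g.right.injective (congrFun (mulVec_injective_of_isUnit g.left.isUnit h) i)

lemma semilinearMap_one_apply (v : n → F) : semilinearMap (1 : GammaL n F) v = v := by
  rw [semilinearMap_apply]
  simp

lemma semilinearMap_mul_apply (g h : GammaL n F) (v : n → F) :
    semilinearMap (g * h) v = semilinearMap g (semilinearMap h v) := by
  rw [semilinearMap_apply, semilinearMap_apply, semilinearMap_apply]
  simp only [SemidirectProduct.mul_left, SemidirectProduct.mul_right,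
    Units.val_mul, ← mulVec_mulVec]
  congr 1
  funext i
  exact (RingHom.map_mulVec (g.right : F →+* F) (h.left : Matrix n n F) _ i).symm

instance : SMul (GammaL n F) (ℙ F (n → F)) where
  smul g x := x.map (semilinearMap g) (semilinearMap_injective g)

lemma smul_mk (g : GammaL n F) {v : n → F} (hv : v ≠ 0) :
    g • Projectivization.mk F v hv = Projectivization.mk F (semilinearMap g v)
      ((map_ne_zero_iff (semilinearMap g) (semilinearMap_injective g)).2 hv) := rfl

instance : MulAction (GammaL n F) (ℙ F (n → F)) where
  one_smul x := by
    induction x using Projectivization.ind with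
    | h v hv => simp only [smul_mk, semilinearMap_one_apply]
  mul_smul g h x := by
    induction x using Projectivization.ind with
    | h v hv => simp only [smul_mk, semilinearMap_mul_apply]

variable (n F) in
def toPerm : GammaL n F →* Equiv.Perm (ℙ F (n → F)) := MulAction.toPermHom _ _

variable (n F) in
def scalar : Fˣ →* GammaL n F :=
  SemidirectProduct.inl.comp (Units.map (Matrix.scalar n : F →+* Matrix n n F).toMonoidHom)

lemma scalar_injective [Nonempty n] : Function.Injective (scalar n F) :=
  SemidirectProduct.inl_injective.comp <|
    Units.map_injective (f := (Matrix.scalar n : F →+* Matrix n n F).toMonoidHom)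
      fun _ _ => Matrix.scalar_inj.1

lemma scalar_mem_ker_toPerm (c : Fˣ) : scalar n F c ∈ (toPerm n F).ker := by
  rw [MonoidHom.mem_ker]
  ext x
  induction x using Projectivization.ind with
  | h v hv =>
    show scalar n F c • Projectivization.mk F v hv = Projectivization.mk F v hv
    rw [smul_mk, Projectivization.mk_eq_mk_iff]
    refine ⟨c, ?_⟩
    rw [semilinearMap_apply]
    simp [scalar, Units.smul_def]

end GammaL

def PGammaL : Subgroup (Equiv.Perm (ℙ F (n → F))) := (GammaL.toPerm n F).range

variable {n F}

lemma card_PGammaL_mul_dvd [Nonempty n] [Fintype F] :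
    Nat.card (PGammaL n F) * (Fintype.card F - 1) ∣ Nat.card (GL n F) * Nat.card (F ≃+* F) := by
  have hN : (GammaL.scalar n F).range ≤ (GammaL.toPerm n F).ker := by
    rintro _ ⟨c, rfl⟩
    exact GammaL.scalar_mem_ker_toPerm c
  have hcard := (GammaL.toPerm n F).card_range_mul_card_dvd hN
  rwa [← Nat.card_congr (MonoidHom.ofInjective GammaL.scalar_injective).toEquiv,
    Nat.card_units, Nat.card_eq_fintype_card (α := F), SemidirectProduct.card] at hcard

lemma card_PGammaL_two_dvd [Fintype F] :
    Nat.card (PGammaL (Fin 2) F) ∣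
      Nat.card (F ≃+* F) * (Fintype.card F ^ 3 - Fintype.card F) := by
  refine Nat.dvd_of_mul_dvd_mul_right (k := Fintype.card F - 1)
    (Nat.sub_pos_of_lt Fintype.one_lt_card) ?_
  convert card_PGammaL_mul_dvd (n := Fin 2) (F := F) using 1
  rw [Matrix.card_GL_fin_two]
  ring

lemma mem_PGammaL_of_forall_mk_eq (π : Equiv.Perm (ℙ F (n → F))) (A : GL n F) (σ : F ≃+* F)
    (h : ∀ (v : n → F) (hv : v ≠ 0), ∃ (w : n → F) (hw : w ≠ 0),
        w = (A : Matrix n n F) *ᵥ (fun i => σ (v i)) ∧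
        π (Projectivization.mk F v hv) = Projectivization.mk F w hw) :
    π ∈ PGammaL n F := by
  refine ⟨⟨A, σ⟩, Equiv.ext fun x => ?_⟩
  induction x using Projectivization.ind with
  | h v hv =>
    obtain ⟨w, hw, rfl, hπ⟩ := h v hv
    exact (GammaL.smul_mk _ hv).trans hπ.symm

end GammaL

/-- Let `F` be a finite field with `q = q₀^ℓ` elements (`q₀` prime) and `q + 1 ≥ 25`.
If a subgroup `K` of `PΓL(2, q)` — realized as a group of permutations of the projective
line `P¹(F)` induced by semilinear transformations `v ↦ A (σ ∘ v)` — acts transitively on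
the `4`-element subsets of `P¹(F)`, then `C(q+1, 4)` divides `ℓ(q³ - q)`, which forces
`(q - 2) ∣ 24ℓ`; for `q ≥ 24` the only solution is `q = 32`. -/
theorem stmt_19 {F : Type} [Field F] [Fintype F]
    (q₀ ℓ : ℕ) (hq₀ : q₀.Prime) (hcard : Fintype.card F = q₀ ^ ℓ)
    (hn : 25 ≤ Fintype.card F + 1)
    (K : Subgroup (Equiv.Perm (Projectivization F (Fin 2 → F))))
    (hsemilinear : ∀ π ∈ K, ∃ (A : GL (Fin 2) F) (σ : F ≃+* F),
      ∀ (v : Fin 2 → F) (hv : v ≠ 0), ∃ (w : Fin 2 → F) (hw : w ≠ 0),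
        w = ((A : GL (Fin 2) F) : Matrix (Fin 2) (Fin 2) F).mulVec (fun i => σ (v i)) ∧
        π (Projectivization.mk F v hv) = Projectivization.mk F w hw)
    (htrans : ∀ s t : Finset (Projectivization F (Fin 2 → F)),
      s.card = 4 → t.card = 4 → ∃ π ∈ K, s.image π = t) :
    (Fintype.card F + 1).choose 4 ∣ ℓ * (Fintype.card F ^ 3 - Fintype.card F) ∧
    (Fintype.card F - 2) ∣ 24 * ℓ ∧
    Fintype.card F = 32 := by
  have hX : Nat.card (ℙ F (Fin 2 → F)) = Fintype.card F + 1 := by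
    rw [Projectivization.card_of_finrank_two F _ (Module.finrank_fin_fun F),
      Nat.card_eq_fintype_card]
  have hchoose : (Fintype.card F + 1).choose 4 ∣ Nat.card K :=
    hX ▸ K.choose_dvd_card_of_forall_image_eq (by omega) htrans
  have hK : K ≤ PGammaL (Fin 2) F := fun π hπ =>
    let ⟨A, σ, h⟩ := hsemilinear π hπ
    mem_PGammaL_of_forall_mk_eq π A σ h
  have hdvd : (Fintype.card F + 1).choose 4 ∣ ℓ * (Fintype.card F ^ 3 - Fintype.card F) := by
    rw [← FiniteField.card_ringEquiv hq₀ hcard]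
    exact hchoose.trans ((Subgroup.card_dvd_of_le hK).trans card_PGammaL_two_dvd)
  have hsub := Nat.sub_two_dvd_of_choose_four_dvd (by omega) hdvd
  have h32 := Nat.pow_eq_32_of_pow_sub_two_dvd hq₀ (by omega) (hcard ▸ hsub)
  exact ⟨hdvd, hsub, hcard.trans h32⟩
end
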